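/- Let G be a group acting on a set Γ with a G-invariant collection W of walls (partitions of Γ into two halfspaces). Define a 0-cube as a function v assigning to each wall one of its halfspaces such that every x ∈ Γ lies in v(W) for all but finitely many walls W. Suppose g ∈ G fixes a 0-cube v (i.e. g·v(W) = v(g·W) = v applied appropriately, so that the choice is g-invariant). If there exists a wall W₀ and n ≥ 1 such that the walls {g^{nr}·W₀ : r ∈ ℤ} are pairwise distinct and nested (the halfspace sequence is strictly nested), then we obtain a contradiction; hence no element g admitting such a nested shifted family of walls can fix a 0-cube. -/
import Mathlib

open Pointwise

private lemma smul_ssubset_core {G Γ : Type*} [Group G] [MulAction G Γ]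
    (a : G) {s t : Set Γ} (h : s ⊂ t) : a • s ⊂ a • t := by
  refine ⟨Set.smul_set_mono h.subset, fun hle => h.not_subset ?_⟩
  have := Set.smul_set_mono (a := a⁻¹) hle
  simpa [inv_smul_smul] using this

private lemma core_contradiction {G Γ : Type*} [Group G] [MulAction G Γ]
    (H : Set (Set Γ))
    (hne : ∀ A ∈ H, A.Nonempty ∧ Aᶜ.Nonempty)
    (hGinv : ∀ (g : G), ∀ A ∈ H, g • A ∈ H)
    (v : Set (Set Γ))
    (hfin : ∀ x : Γ, {A | A ∈ v ∧ x ∉ A}.Finite)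
    (h : G) (hfixh : ∀ A ∈ H, (A ∈ v ↔ h • A ∈ v))
    (B : Set Γ) (hB : B ∈ H) (hBv : B ∈ v)
    (hss : h • B ⊂ B)
    (hdist : ∀ r s : ℕ, r ≠ s → h ^ r • B ≠ h ^ s • B) : False := by
  have hH : ∀ k : ℕ, h ^ k • B ∈ H := by
    intro k
    induction k with
    | zero => simpa using hB
    | succ k ih =>
        have : h ^ (k + 1) • B = h • (h ^ k • B) := by
          rw [pow_succ', mul_smul]
        rw [this]; exact hGinv h _ ih
  have hv : ∀ k : ℕ, h ^ k • B ∈ v := by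
    intro k
    induction k with
    | zero => simpa using hBv
    | succ k ih =>
        have e : h ^ (k + 1) • B = h • (h ^ k • B) := by
          rw [pow_succ', mul_smul]
        rw [e]; exact (hfixh _ (hH k)).1 ih
  have hsub : ∀ k : ℕ, h ^ k • B ⊆ B := by
    intro k
    induction k with
    | zero => simp
    | succ k ih =>
        have e : h ^ (k + 1) • B = h • (h ^ k • B) := by
          rw [pow_succ', mul_smul]
        rw [e]
        exact (Set.smul_set_mono ih).trans hss.subset
  obtain ⟨x, hx⟩ := (hne _ (hGinv h B hB)).2
  have hxnot : ∀ k : ℕ, x ∉ h ^ (k + 1) • B := by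
    intro k hxk
    have e : h ^ (k + 1) • B = h • (h ^ k • B) := by
      rw [pow_succ', mul_smul]
    rw [e] at hxk
    exact hx (Set.smul_set_mono (hsub k) hxk)
  have hinf : {A | A ∈ v ∧ x ∉ A}.Infinite := by
    apply Set.infinite_of_injective_forall_mem
      (f := fun k : ℕ => h ^ (k + 1) • B)
    · intro a b hab
      by_contra hne'
      exact hdist (a + 1) (b + 1) (by omega) hab
    · intro k
      exact ⟨hv (k + 1), hxnot k⟩
  exact hinf (hfin x)

/-- An element `g` admitting a strictly nested shifted bi-infinite family of
walls cannot fix a 0-cube of the dual cube complex. Walls are encoded by a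
complement- and `G`-invariant collection `H` of halfspaces; a 0-cube `v` picks
one halfspace of each wall, with every point lying in all but finitely many
chosen halfspaces. -/
theorem stmt_5 {G Γ : Type*} [Group G] [MulAction G Γ]
    (H : Set (Set Γ))
    (hne : ∀ A ∈ H, A.Nonempty ∧ Aᶜ.Nonempty)
    (hcompl : ∀ A ∈ H, Aᶜ ∈ H)
    (hGinv : ∀ (g : G), ∀ A ∈ H, g • A ∈ H)
    (v : Set (Set Γ)) (hvH : v ⊆ H)
    (hpick : ∀ A ∈ H, (A ∈ v ∧ Aᶜ ∉ v) ∨ (A ∉ v ∧ Aᶜ ∈ v))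
    (hfin : ∀ x : Γ, {A | A ∈ v ∧ x ∉ A}.Finite)
    (g : G) (hfix : ∀ A ∈ H, (A ∈ v ↔ g • A ∈ v))
    (A₀ : Set Γ) (hA₀ : A₀ ∈ H) (n : ℕ) (hn : 1 ≤ n)
    (hdistinct : ∀ r s : ℤ, r ≠ s →
      ((g ^ n : G) ^ r) • A₀ ≠ ((g ^ n : G) ^ s) • A₀)
    (hnest : (g ^ n : G) • A₀ ⊂ A₀ ∨ A₀ ⊂ (g ^ n : G) • A₀) :
    False := by
  set h : G := g ^ n with hh
  -- v is fixed by all powers of g, in particular by h and h⁻¹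
  have hfixpow : ∀ k : ℕ, ∀ A ∈ H, (A ∈ v ↔ g ^ k • A ∈ v) := by
    intro k
    induction k with
    | zero => intro A hA; simp
    | succ k ih =>
        intro A hA
        have e : g ^ (k + 1) • A = g • (g ^ k • A) := by
          rw [pow_succ', mul_smul]
        rw [e]
        exact (ih A hA).trans (hfix _ (hGinv _ _ hA))
  have hfixh : ∀ A ∈ H, (A ∈ v ↔ h • A ∈ v) := hfixpow n
  have hfixhinv : ∀ A ∈ H, (A ∈ v ↔ h⁻¹ • A ∈ v) := by
    intro A hA
    have := hfixh _ (hGinv h⁻¹ A hA)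
    rw [smul_inv_smul] at this
    exact this.symm
  -- distinctness of natural powers, for h and h⁻¹, and for A₀ᶜ
  have hdh : ∀ r s : ℕ, r ≠ s → h ^ r • A₀ ≠ h ^ s • A₀ := by
    intro r s hrs
    have := hdistinct (r : ℤ) (s : ℤ) (by exact_mod_cast hrs)
    simpa [zpow_natCast] using this
  have hdhinv : ∀ r s : ℕ, r ≠ s → h⁻¹ ^ r • A₀ ≠ h⁻¹ ^ s • A₀ := by
    intro r s hrs
    have := hdistinct (-(r : ℤ)) (-(s : ℤ)) (by simpa using fun e => hrs (by exact_mod_cast e))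
    simpa [zpow_neg, zpow_natCast, inv_pow] using this
  have hcc : ∀ (a : G) (r : ℕ), a ^ r • A₀ᶜ = (a ^ r • A₀)ᶜ := by
    intro a r; exact Set.smul_set_compl
  have hdhc : ∀ r s : ℕ, r ≠ s → h ^ r • A₀ᶜ ≠ h ^ s • A₀ᶜ := by
    intro r s hrs e
    rw [hcc, hcc] at e
    exact hdh r s hrs (compl_injective e)
  have hdhinvc : ∀ r s : ℕ, r ≠ s → h⁻¹ ^ r • A₀ᶜ ≠ h⁻¹ ^ s • A₀ᶜ := by
    intro r s hrs e
    rw [hcc, hcc] at e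
    exact hdhinv r s hrs (compl_injective e)
  have hA₀c : A₀ᶜ ∈ H := hcompl _ hA₀
  rcases hnest with hss | hss
  · rcases hpick A₀ hA₀ with ⟨hv₀, -⟩ | ⟨-, hvc⟩
    · exact core_contradiction H hne hGinv v hfin h hfixh A₀ hA₀ hv₀ hss hdh
    · -- A₀ᶜ ∈ v, and h⁻¹ • A₀ᶜ ⊂ A₀ᶜ
      have h1 : A₀ ⊂ h⁻¹ • A₀ := by
        have := smul_ssubset_core h⁻¹ hss
        simpa [inv_smul_smul] using this
      have h2 : h⁻¹ • A₀ᶜ ⊂ A₀ᶜ := by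
        rw [Set.smul_set_compl]
        exact ⟨Set.compl_subset_compl.2 h1.subset,
          fun hle => h1.not_subset (Set.compl_subset_compl.1 hle)⟩
      exact core_contradiction H hne hGinv v hfin h⁻¹ hfixhinv A₀ᶜ hA₀c hvc h2 hdhinvc
  · rcases hpick A₀ hA₀ with ⟨hv₀, -⟩ | ⟨-, hvc⟩
    · have h1 : h⁻¹ • A₀ ⊂ A₀ := by
        have := smul_ssubset_core h⁻¹ hss
        simpa [inv_smul_smul] using this
      exact core_contradiction H hne hGinv v hfin h⁻¹ hfixhinv A₀ hA₀ hv₀ h1 hdhinv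
    · have h2 : h • A₀ᶜ ⊂ A₀ᶜ := by
        rw [Set.smul_set_compl]
        exact ⟨Set.compl_subset_compl.2 hss.subset,
          fun hle => hss.not_subset (Set.compl_subset_compl.1 hle)⟩
      exact core_contradiction H hne hGinv v hfin h hfixh A₀ᶜ hA₀c hvc h2 hdhc
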